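/- arXiv:2401.13862 — 2 statements merged into one kernel-verified Lean document; each statement's English description precedes it below -/
import Mathlib

section
/- For n ≥ 1, define the generalized Veronese map Φ_n : ℝ^{n+1} → ℝ^{m(n)} (with m(n) = n(n+3)/2) inductively by Φ_1(x_1,x_2) = (2x_1x_2, x_1² − x_2²) and, for n ≥ 2, Φ_n(x_1,…,x_{n+1}) = a_n( (1/a_{n−1})Φ_{n−1}(x_1,…,x_n), x_1x_{n+1}, …, x_n x_{n+1}, (1/(n a_n))(x_1²+⋯+x_n² − n x_{n+1}²) ), where a_n = √((2n+2)/n). Then |Φ_n(x)| = |x|² for every x ∈ ℝ^{n+1}. -/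
/-- `m(n) = n(n+3)/2`, the multiplicity of the first eigenvalue of round `ℝP^n`. -/
def mdim (n : ℕ) : ℕ := n * (n + 3) / 2

/-- `a_n = √((2n+2)/n)`. -/
noncomputable def aCoef (n : ℕ) : ℝ := Real.sqrt ((2 * n + 2) / n)

/-- The generalized Veronese map `Φ_n : ℝ^{n+1} → ℝ^{m(n)}` defined inductively. -/
noncomputable def Phi : (n : ℕ) → (Fin (n + 1) → ℝ) → Fin (mdim n) → ℝ
  | 0, _, _ => 0
  | 1, x, i => if (i : ℕ) = 0 then 2 * x 0 * x 1 else x 0 ^ 2 - x 1 ^ 2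
  | (n + 2), x, i =>
      aCoef (n + 2) *
        (if h1 : (i : ℕ) < mdim (n + 1) then
          (1 / aCoef (n + 1)) * Phi (n + 1) (fun j => x j.castSucc) ⟨i, h1⟩
        else if h2 : (i : ℕ) < mdim (n + 1) + (n + 2) then
          x ⟨(i : ℕ) - mdim (n + 1), by omega⟩ * x (Fin.last (n + 2))
        else
          (1 / ((n + 2) * aCoef (n + 2))) *
            ((∑ j : Fin (n + 2), x j.castSucc ^ 2) - (n + 2) * x (Fin.last (n + 2)) ^ 2))


/-! With `S = x₁² + ⋯ + x_{n+1}²` and `t = x_{n+2}²`, the three blocks of `Φ_{n+1}(x)` contribute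
`(a_{n+1}/a_n)² S² + a_{n+1}² S t + ((S - (n+1) t)/(n+1))²` to its squared norm, by induction.
Since `a_{n+1}²/a_n² = ((n+1)² - 1)/(n+1)²` and `a_{n+1}² = 2(n+2)/(n+1)`, this is `(S + t)²`. -/

lemma mdim_succ (n : ℕ) : mdim (n + 1) = mdim n + (n + 2) := by
  unfold mdim
  rw [show (n + 1) * (n + 1 + 3) = n * (n + 3) + (n + 2) * 2 by ring,
    Nat.add_mul_div_right _ _ two_pos]

lemma aCoef_sq (n : ℕ) : aCoef n ^ 2 = (2 * n + 2) / n :=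
  Real.sq_sqrt (by positivity)

lemma aCoef_ne_zero {n : ℕ} (hn : n ≠ 0) : aCoef n ≠ 0 := by
  rw [aCoef, Real.sqrt_ne_zero']
  positivity

section Phi

variable {n : ℕ} (x : Fin (n + 3) → ℝ)

lemma Phi_succ_succ_of_lt {i : Fin (mdim (n + 2))} (hi : (i : ℕ) < mdim (n + 1)) :
    Phi (n + 2) x i =
      aCoef (n + 2) / aCoef (n + 1) * Phi (n + 1) (fun j => x j.castSucc) ⟨i, hi⟩ := by
  rw [Phi, dif_pos hi]
  ring

lemma Phi_succ_succ_of_eq_add {i : Fin (mdim (n + 2))} (j : Fin (n + 2))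
    (hi : (i : ℕ) = mdim (n + 1) + j) :
    Phi (n + 2) x i = aCoef (n + 2) * (x j.castSucc * x (Fin.last (n + 2))) := by
  rw [Phi, dif_neg (by omega), dif_pos (by omega)]
  congr 3
  ext
  simp [hi]

lemma Phi_succ_succ_of_le {i : Fin (mdim (n + 2))} (hi : mdim (n + 1) + (n + 2) ≤ i) :
    Phi (n + 2) x i =
      ((∑ j : Fin (n + 2), x j.castSucc ^ 2) - (n + 2) * x (Fin.last (n + 2)) ^ 2) / (n + 2) := by
  rw [Phi, dif_neg (by omega), dif_neg (by omega)]
  field_simp [aCoef_ne_zero (by omega : n + 2 ≠ 0)]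

lemma sum_sq_Phi_succ_succ :
    ∑ i, Phi (n + 2) x i ^ 2 =
      (aCoef (n + 2) / aCoef (n + 1)) ^ 2 * ∑ i, Phi (n + 1) (fun j => x j.castSucc) i ^ 2
      + aCoef (n + 2) ^ 2 * x (Fin.last (n + 2)) ^ 2 * ∑ j : Fin (n + 2), x j.castSucc ^ 2
      + (((∑ j : Fin (n + 2), x j.castSucc ^ 2) - (n + 2) * x (Fin.last (n + 2)) ^ 2)
          / (n + 2)) ^ 2 := by
  rw [← Fin.sum_congr' _ (mdim_succ (n + 1)).symm, Fin.sum_univ_add, Fin.sum_univ_castSucc,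
    ← add_assoc]
  congr 2
  · rw [Finset.mul_sum]
    refine Finset.sum_congr rfl fun i _ => ?_
    rw [Phi_succ_succ_of_lt x (by simp), mul_pow]
    rfl
  · rw [Finset.mul_sum]
    refine Finset.sum_congr rfl fun j _ => ?_
    rw [Phi_succ_succ_of_eq_add x j (by simp)]
    ring
  · rw [Phi_succ_succ_of_le x (by simp)]

end Phi

lemma sum_sq_Phi (n : ℕ) (x : Fin (n + 2) → ℝ) :
    ∑ i, Phi (n + 1) x i ^ 2 = (∑ j, x j ^ 2) ^ 2 := by
  induction n with
  | zero =>
    change ∑ i : Fin 2, Phi 1 x i ^ 2 = (∑ j : Fin 2, x j ^ 2) ^ 2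
    simp [Fin.sum_univ_two, Phi]
    ring
  | succ n ih =>
    rw [sum_sq_Phi_succ_succ, ih, Fin.sum_univ_castSucc (fun j => x j ^ 2), div_pow, aCoef_sq,
      aCoef_sq]
    push_cast
    field_simp
    ring

/-- `|Φ_n(x)| = |x|²` for every `x ∈ ℝ^{n+1}` when `n ≥ 1`. -/
theorem veronese_norm_sq (n : ℕ) (hn : 1 ≤ n) (x : Fin (n + 1) → ℝ) :
    Real.sqrt (∑ i, Phi n x i ^ 2) = ∑ j, x j ^ 2 := by
  obtain ⟨n, rfl⟩ := Nat.exists_eq_add_of_le' hn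
  rw [sum_sq_Phi, Real.sqrt_sq (by positivity)]
end

section
/- For n ≥ 1, the generalized Veronese map Φ_n satisfies (DΦ_n(x))ᵀ DΦ_n(x) = (2(n+1)/n)|x|² I + (2(n−1)/n) x xᵀ for all x ∈ ℝ^{n+1}, where DΦ_n is the Jacobian matrix of Φ_n. -/
/-! `Φ_n` is quadratic, so its derivative `DΦ_n(x) v` (`dPhi n x v`) is bilinear in `(x, v)`, and
the Gram identity is the polarised statement
`⟨DΦ_n(x) u, DΦ_n(x) v⟩ = (2(n+1)/n) |x|² ⟨u, v⟩ + (2(n-1)/n) ⟨x, u⟩ ⟨x, v⟩` at `u = e_i`, `v = e_j`.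
It follows by induction on `n` from the recursive definition: for `x = (x', s)` the three blocks
of `DΦ_n(x) u` are `(a_n / a_{n-1}) DΦ_{n-1}(x') u'`, `a_n (s u' + u_{n+1} x')` and
`(2/n) (⟨x', u'⟩ - n s u_{n+1})`, and since `a_n² = 2(n+1)/n` their pairings add up to the
right-hand side. -/

lemma dotProduct_eq_init_add_last {R : Type*} [NonUnitalNonAssocSemiring R] {n : ℕ}
    (v w : Fin (n + 1) → R) :
    v ⬝ᵥ w = Fin.init v ⬝ᵥ Fin.init w + v (Fin.last n) * w (Fin.last n) :=
  Fin.sum_univ_castSucc _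

lemma dotProduct_eq_of_eq_add_add_one {R : Type*} [NonUnitalNonAssocSemiring R] {a b m : ℕ}
    (h : m = a + b + 1) (v w : Fin m → R) :
    v ⬝ᵥ w = (fun k : Fin a => v ⟨k, by omega⟩) ⬝ᵥ (fun k : Fin a => w ⟨k, by omega⟩)
      + (fun t : Fin b => v ⟨a + t, by omega⟩) ⬝ᵥ (fun t : Fin b => w ⟨a + t, by omega⟩)
      + v ⟨a + b, by omega⟩ * w ⟨a + b, by omega⟩ := by
  subst h
  rw [dotProduct, Fin.sum_univ_castSucc, Fin.sum_univ_add]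
  rfl

lemma mdim_add_two (n : ℕ) : mdim (n + 2) = mdim (n + 1) + (n + 2) + 1 := by
  rw [mdim_succ (n + 1)]
  omega

lemma aCoef_pos {n : ℕ} (hn : n ≠ 0) : 0 < aCoef n :=
  Real.sqrt_pos.2 (by positivity)

noncomputable def dPhi : (n : ℕ) → (Fin (n + 1) → ℝ) → (Fin (n + 1) → ℝ) → Fin (mdim n) → ℝ
  | 0, _, _, _ => 0
  | 1, x, v, i => if (i : ℕ) = 0 then 2 * (x 0 * v 1 + x 1 * v 0) else 2 * (x 0 * v 0 - x 1 * v 1)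
  | (n + 2), x, v, i =>
      if h1 : (i : ℕ) < mdim (n + 1) then
        aCoef (n + 2) / aCoef (n + 1) * dPhi (n + 1) (Fin.init x) (Fin.init v) ⟨i, h1⟩
      else if h2 : (i : ℕ) < mdim (n + 1) + (n + 2) then
        aCoef (n + 2) * (v ⟨i - mdim (n + 1), by omega⟩ * x (Fin.last (n + 2))
          + x ⟨i - mdim (n + 1), by omega⟩ * v (Fin.last (n + 2)))
      else
        2 / ((n : ℝ) + 2) *
          (Fin.init x ⬝ᵥ Fin.init v - ((n : ℝ) + 2) * (x (Fin.last (n + 2)) * v (Fin.last (n + 2))))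

section derivative

lemma exists_hasFDerivAt_Phi_one_apply (x : Fin 2 → ℝ) (k : Fin (mdim 1)) :
    ∃ D : (Fin 2 → ℝ) →L[ℝ] ℝ, HasFDerivAt (fun y => Phi 1 y k) D x ∧ ∀ v, D v = dPhi 1 x v k := by
  have hx0 := hasFDerivAt_apply (𝕜 := ℝ) 0 x
  have hx1 := hasFDerivAt_apply (𝕜 := ℝ) 1 x
  by_cases hk : (k : ℕ) = 0
  · have hPhi : (fun y => Phi 1 y k) = fun y => 2 * y 0 * y 1 := by
      funext y; simp [Phi, hk]
    refine ⟨_, hPhi ▸ (hx0.const_mul 2).fun_mul hx1, fun v => ?_⟩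
    simp only [add_apply, smul_apply, ContinuousLinearMap.proj_apply, smul_eq_mul, dPhi, hk,
      if_true]
    ring
  · have hPhi : (fun y => Phi 1 y k) = fun y => y 0 ^ 2 - y 1 ^ 2 := by
      funext y; simp [Phi, hk]
    refine ⟨_, hPhi ▸ (hx0.pow 2).fun_sub (hx1.pow 2), fun v => ?_⟩
    simp only [sub_apply, smul_apply, ContinuousLinearMap.proj_apply, smul_eq_mul, dPhi, hk,
      if_false]
    ring

variable {n : ℕ} (x : Fin (n + 3) → ℝ) {k : Fin (mdim (n + 2))}

lemma exists_hasFDerivAt_Phi_add_two_apply_of_lt (h1 : (k : ℕ) < mdim (n + 1))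
    (ih : ∃ D : (Fin (n + 2) → ℝ) →L[ℝ] ℝ, HasFDerivAt (fun y => Phi (n + 1) y ⟨k, h1⟩) D
      (Fin.init x) ∧ ∀ v, D v = dPhi (n + 1) (Fin.init x) v ⟨k, h1⟩) :
    ∃ D : (Fin (n + 3) → ℝ) →L[ℝ] ℝ,
      HasFDerivAt (fun y => Phi (n + 2) y k) D x ∧ ∀ v, D v = dPhi (n + 2) x v k := by
  obtain ⟨D, hD, hDv⟩ := ih
  have hinit : HasFDerivAt (fun (y : Fin (n + 3) → ℝ) (j : Fin (n + 2)) => y j.castSucc) _ x :=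
    hasFDerivAt_pi.2 fun j => hasFDerivAt_apply (𝕜 := ℝ) j.castSucc x
  have hPhi : (fun y => Phi (n + 2) y k) = fun y =>
      aCoef (n + 2) * (1 / aCoef (n + 1) * Phi (n + 1) (fun j => y j.castSucc) ⟨k, h1⟩) := by
    funext y; simp [Phi, h1]
  refine ⟨_, hPhi ▸ ((hD.comp x hinit).const_mul _).const_mul _, fun v => ?_⟩
  simp only [dPhi, dif_pos h1, smul_apply, ContinuousLinearMap.comp_apply, hDv, smul_eq_mul]
  rw [one_div, div_eq_mul_inv, mul_assoc]
  rfl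

lemma exists_hasFDerivAt_Phi_add_two_apply_of_mixed (h1 : ¬ (k : ℕ) < mdim (n + 1))
    (h2 : (k : ℕ) < mdim (n + 1) + (n + 2)) :
    ∃ D : (Fin (n + 3) → ℝ) →L[ℝ] ℝ,
      HasFDerivAt (fun y => Phi (n + 2) y k) D x ∧ ∀ v, D v = dPhi (n + 2) x v k := by
  have hPhi : (fun y => Phi (n + 2) y k) = fun y =>
      aCoef (n + 2) * (y ⟨k - mdim (n + 1), by omega⟩ * y (Fin.last (n + 2))) := by
    funext y; simp [Phi, h1, h2]
  refine ⟨_, hPhi ▸ (((hasFDerivAt_apply (𝕜 := ℝ) _ x).fun_mul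
    (hasFDerivAt_apply (𝕜 := ℝ) _ x)).const_mul _), fun v => ?_⟩
  simp only [add_apply, smul_apply, ContinuousLinearMap.proj_apply, smul_eq_mul, dPhi, h1, h2,
    dif_pos, dif_neg, not_false_eq_true]
  ring

lemma exists_hasFDerivAt_Phi_add_two_apply_of_last (h2 : ¬ (k : ℕ) < mdim (n + 1) + (n + 2)) :
    ∃ D : (Fin (n + 3) → ℝ) →L[ℝ] ℝ,
      HasFDerivAt (fun y => Phi (n + 2) y k) D x ∧ ∀ v, D v = dPhi (n + 2) x v k := by
  have h1 : ¬ (k : ℕ) < mdim (n + 1) := by omega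
  have hPhi : (fun y => Phi (n + 2) y k) = fun y =>
      aCoef (n + 2) * (1 / ((n + 2) * aCoef (n + 2)) *
        (∑ j : Fin (n + 2), y j.castSucc ^ 2 - (n + 2) * y (Fin.last (n + 2)) ^ 2)) := by
    funext y; simp [Phi, h1, h2]
  have hsum := HasFDerivAt.fun_sum (u := Finset.univ) fun (j : Fin (n + 2)) _ =>
    (hasFDerivAt_apply (𝕜 := ℝ) j.castSucc x).pow 2
  have hlast := ((hasFDerivAt_apply (𝕜 := ℝ) (Fin.last (n + 2)) x).pow 2).const_mul ((n : ℝ) + 2)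
  refine ⟨_, hPhi ▸ ((hsum.fun_sub hlast).const_mul _).const_mul _, fun v => ?_⟩
  have hA := (aCoef_pos (n := n + 2) (by omega)).ne'
  simp only [smul_apply, sub_apply, sum_apply, ContinuousLinearMap.proj_apply, smul_eq_mul,
    nsmul_eq_mul, Nat.cast_ofNat, Nat.add_one_sub_one, pow_one, mul_assoc, ← Finset.mul_sum,
    dPhi, h1, h2, dif_neg, not_false_eq_true, dotProduct, Fin.init]
  field_simp

end derivative

theorem exists_hasFDerivAt_Phi_apply : ∀ (n : ℕ) (x : Fin (n + 1) → ℝ) (k : Fin (mdim n)),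
    ∃ D : (Fin (n + 1) → ℝ) →L[ℝ] ℝ,
      HasFDerivAt (fun y => Phi n y k) D x ∧ ∀ v, D v = dPhi n x v k
  | 0, _, k => absurd k.isLt (by simp [mdim])
  | 1, x, k => exists_hasFDerivAt_Phi_one_apply x k
  | n + 2, x, k => by
    by_cases h1 : (k : ℕ) < mdim (n + 1)
    · exact exists_hasFDerivAt_Phi_add_two_apply_of_lt x h1
        (exists_hasFDerivAt_Phi_apply (n + 1) (Fin.init x) ⟨k, h1⟩)
    by_cases h2 : (k : ℕ) < mdim (n + 1) + (n + 2)
    · exact exists_hasFDerivAt_Phi_add_two_apply_of_mixed x h1 h2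
    · exact exists_hasFDerivAt_Phi_add_two_apply_of_last x h2

theorem fderiv_Phi_apply (n : ℕ) (x v : Fin (n + 1) → ℝ) (k : Fin (mdim n)) :
    fderiv ℝ (Phi n) x v k = dPhi n x v k := by
  choose D hD hDv using exists_hasFDerivAt_Phi_apply n x
  rw [(hasFDerivAt_pi.2 hD).fderiv]
  exact hDv k v

section blocks

variable {n : ℕ} (x v : Fin (n + 3) → ℝ)

lemma dPhi_add_two_init_block :
    (fun k : Fin (mdim (n + 1)) => dPhi (n + 2) x v ⟨k, by have := mdim_add_two n; omega⟩)
      = (aCoef (n + 2) / aCoef (n + 1)) • dPhi (n + 1) (Fin.init x) (Fin.init v) := by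
  funext k
  simp [dPhi]

lemma dPhi_add_two_mixed_block :
    (fun t : Fin (n + 2) => dPhi (n + 2) x v ⟨mdim (n + 1) + t, by have := mdim_add_two n; omega⟩)
      = aCoef (n + 2) • (x (Fin.last _) • Fin.init v + v (Fin.last _) • Fin.init x) := by
  funext t
  have h1 : ¬ mdim (n + 1) + (t : ℕ) < mdim (n + 1) := by omega
  have h2 : mdim (n + 1) + (t : ℕ) < mdim (n + 1) + (n + 2) := by omega
  have ht : (⟨t, by omega⟩ : Fin (n + 3)) = t.castSucc := rfl
  simp only [dPhi, dif_neg h1, dif_pos h2, Pi.smul_apply, Pi.add_apply, smul_eq_mul, Fin.init,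
    Nat.add_sub_cancel_left, ht]
  ring

lemma dPhi_add_two_last :
    dPhi (n + 2) x v ⟨mdim (n + 1) + (n + 2), by have := mdim_add_two n; omega⟩
      = 2 / ((n : ℝ) + 2) *
        (Fin.init x ⬝ᵥ Fin.init v - ((n : ℝ) + 2) * (x (Fin.last _) * v (Fin.last _))) := by
  simp [dPhi]

end blocks

theorem dPhi_dotProduct_dPhi : ∀ (n : ℕ) (x u v : Fin (n + 1) → ℝ),
    dPhi n x u ⬝ᵥ dPhi n x v
      = 2 * ((n : ℝ) + 1) / n * (x ⬝ᵥ x) * (u ⬝ᵥ v) + 2 * ((n : ℝ) - 1) / n * (x ⬝ᵥ u) * (x ⬝ᵥ v)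
  -- `mdim 0 = 0`, and the right-hand side vanishes because `x / 0 = 0`.
  | 0, _, _, _ => by
    have : IsEmpty (Fin (mdim 0)) := Fin.isEmpty'
    simp [dotProduct]
  | 1, x, u, v => by
    change ∑ k : Fin 2, dPhi 1 x u k * dPhi 1 x v k = _
    simp only [Nat.reduceAdd, Fin.sum_univ_two, dotProduct, dPhi, Fin.isValue, Fin.val_zero,
      Fin.val_one, if_true, one_ne_zero, if_false, Nat.cast_one, div_one]
    ring
  | n + 2, x, u, v => by
    rw [dotProduct_eq_of_eq_add_add_one (mdim_add_two n), dPhi_add_two_init_block,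
      dPhi_add_two_init_block, dPhi_add_two_mixed_block, dPhi_add_two_mixed_block,
      dPhi_add_two_last, dPhi_add_two_last]
    simp only [smul_dotProduct, dotProduct_smul, add_dotProduct, dotProduct_add, smul_eq_mul,
      dPhi_dotProduct_dPhi (n + 1)]
    rw [dotProduct_eq_init_add_last x x, dotProduct_eq_init_add_last u v,
      dotProduct_eq_init_add_last x u, dotProduct_eq_init_add_last x v,
      dotProduct_comm (Fin.init u) (Fin.init x)]
    have hB := (aCoef_pos (n := n + 1) (by omega)).ne'
    field_simp
    rw [aCoef_sq, aCoef_sq]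
    field_simp
    push_cast
    ring

/-- The `(i, j)` entry of `(DΦ_n)ᵀ DΦ_n` is `∑_k ∂_i (Φ_n)_k ∂_j (Φ_n)_k`. -/
theorem veronese_jacobian_gram_general (n : ℕ) (x : Fin (n + 1) → ℝ)
    (i j : Fin (n + 1)) :
    ∑ k, fderiv ℝ (Phi n) x (Pi.single i 1) k * fderiv ℝ (Phi n) x (Pi.single j 1) k
      = (2 * ((n : ℝ) + 1) / n) * (∑ l, x l ^ 2) * (if i = j then 1 else 0)
        + (2 * ((n : ℝ) - 1) / n) * (x i * x j) := by
  simp only [fderiv_Phi_apply]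
  change dPhi n x (Pi.single i 1) ⬝ᵥ dPhi n x (Pi.single j 1) = _
  rw [dPhi_dotProduct_dPhi, single_one_dotProduct, dotProduct_single_one, dotProduct_single_one,
    Pi.single_apply, dotProduct]
  simp only [sq, mul_assoc]

/-- `(DΦ_n(x))ᵀ DΦ_n(x) = (2(n+1)/n)|x|² I + (2(n−1)/n) x xᵀ` entrywise:
the `(i,j)` entry of `(DΦ_n)ᵀ DΦ_n` is `∑_k ∂_i (Φ_n)_k ∂_j (Φ_n)_k`. -/
theorem veronese_jacobian_gram (n : ℕ) (hn : 1 ≤ n) (x : Fin (n + 1) → ℝ)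
    (i j : Fin (n + 1)) :
    ∑ k, fderiv ℝ (Phi n) x (Pi.single i 1) k * fderiv ℝ (Phi n) x (Pi.single j 1) k
      = (2 * ((n : ℝ) + 1) / n) * (∑ l, x l ^ 2) * (if i = j then 1 else 0)
        + (2 * ((n : ℝ) - 1) / n) * (x i * x j) :=
  veronese_jacobian_gram_general n x i j
end
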